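/- arXiv:2312.06433 — 9 statements merged into one kernel-verified Lean document; each statement's English description precedes it below -/
import Mathlib

section
/- Let P be a closed convex cone in ℝ^d that is spanning (P − P = ℝ^d) and pointed (P ∩ (−P) = {0}). Let A ⊆ ℝ^d be a closed set with ∅ ≠ A ≠ ℝ^d and −P + A ⊆ A, and suppose that for every x ∈ ℝ^d either A + x ⊆ A or A ⊆ A + x. Then there exist a unique vector λ ∈ ℝ^d with ‖λ‖ = 1 and ⟨λ|x⟩ ≥ 0 for all x ∈ P, and a unique real number t, such that A = {y ∈ ℝ^d : ⟨λ|y⟩ ≤ t}. -/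
/-!
The translations `x` with `A + x ⊆ A` form a closed additive submonoid `Q`, and the
comparability hypothesis says `Q ∪ -Q` is the whole space. Hence `Q` is closed under halving
(`x / 2 = x + (-x / 2)`), so it is midpoint-convex and, being closed, convex. Separating a point
from `Q` by Hahn–Banach gives a unit `l` with `⟪l, ·⟫ ≤ 0` on `Q`, and totality forces
`Q = {x | ⟪l, x⟫ ≤ 0}`. Then `A` is a closed sublevel set of `⟪l, ·⟫`, `-P ⊆ Q` gives
`l ≥ 0` on `P`, and a half-space determines its unit normal and offset.
-/

open Pointwise RealInnerProductSpace

theorem Real.ordConnected_of_isClosed_of_midpoint_mem {T : Set ℝ} (hT : IsClosed T)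
    (hmid : ∀ a ∈ T, ∀ b ∈ T, midpoint ℝ a b ∈ T) : T.OrdConnected := by
  refine ⟨fun a ha b hb t ht => ?_⟩
  by_contra htT
  have hbddAbove : BddAbove (T ∩ Set.Iic t) := ⟨t, fun x hx => hx.2⟩
  have hbddBelow : BddBelow (T ∩ Set.Ici t) := ⟨t, fun x hx => hx.2⟩
  obtain ⟨huT, hu_le⟩ : sSup (T ∩ Set.Iic t) ∈ T ∩ Set.Iic t :=
    (hT.inter isClosed_Iic).csSup_mem ⟨a, ha, ht.1⟩ hbddAbove
  obtain ⟨hvT, hv_ge⟩ : sInf (T ∩ Set.Ici t) ∈ T ∩ Set.Ici t :=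
    (hT.inter isClosed_Ici).csInf_mem ⟨b, hb, ht.2⟩ hbddBelow
  set u := sSup (T ∩ Set.Iic t)
  set v := sInf (T ∩ Set.Ici t)
  -- `u < t < v` are the points of `T` nearest to `t`, yet their midpoint lies in `T` between them
  have hut : u < t := hu_le.lt_of_ne fun h => htT (h ▸ huT)
  have htv : t < v := hv_ge.lt_of_ne fun h => htT (h ▸ hvT)
  have hm : midpoint ℝ u v = (u + v) / 2 := by
    rw [midpoint_eq_smul_add, smul_eq_mul, invOf_eq_inv]; ring
  rcases le_total (midpoint ℝ u v) t with h | h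
  · linarith [le_csSup hbddAbove ⟨hmid u huT v hvT, h⟩]
  · linarith [csInf_le hbddBelow ⟨hmid u huT v hvT, h⟩]

theorem convex_of_isClosed_of_midpoint_mem {E : Type*} [AddCommGroup E] [Module ℝ E]
    [TopologicalSpace E] [IsTopologicalAddGroup E] [ContinuousSMul ℝ E] {s : Set E}
    (hs : IsClosed s) (hmid : ∀ x ∈ s, ∀ y ∈ s, midpoint ℝ x y ∈ s) : Convex ℝ s := by
  refine convex_iff_segment_subset.2 fun x hx y hy => ?_
  rw [segment_eq_image_lineMap]
  rintro _ ⟨θ, hθ, rfl⟩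
  let T : Set ℝ := AffineMap.lineMap x y ⁻¹' s
  have hT : T.OrdConnected := Real.ordConnected_of_isClosed_of_midpoint_mem
    (hs.preimage AffineMap.lineMap_continuous) fun a ha b hb => by
      simpa only [T, Set.mem_preimage, AffineMap.map_midpoint] using hmid _ ha _ hb
  exact hT.out (by simpa [T] using hx) (by simpa [T] using hy) hθ

section InnerProductSpace

variable {E : Type*} [NormedAddCommGroup E] [InnerProductSpace ℝ E]

theorem closure_setOf_inner_lt {l : E} (hl : l ≠ 0) (t : ℝ) :
    closure {y | ⟪l, y⟫ < t} = {y | ⟪l, y⟫ ≤ t} := by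
  have hf : innerSL ℝ l ≠ 0 := fun h => hl <| by
    simpa using congr($h l)
  have := ((innerSL ℝ l).isOpenMap_of_ne_zero hf).preimage_closure_eq_closure_preimage
    (innerSL ℝ l).continuous (Set.Iio t)
  rw [closure_Iio] at this
  exact this.symm

theorem AddSubmonoid.convex_of_isClosed_of_forall_mem_or_neg_mem (Q : AddSubmonoid E)
    (hQ : IsClosed (Q : Set E)) (htotal : ∀ x, x ∈ Q ∨ -x ∈ Q) : Convex ℝ (Q : Set E) := by
  have half_mem : ∀ x ∈ Q, (⅟2 : ℝ) • x ∈ Q := fun x hx => by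
    rcases htotal ((⅟2 : ℝ) • x) with h | h
    · exact h
    · convert Q.add_mem hx h using 1
      rw [invOf_eq_inv]; module
  refine convex_of_isClosed_of_midpoint_mem hQ fun x hx y hy => ?_
  rw [midpoint_eq_smul_add]
  exact half_mem _ (Q.add_mem hx hy)

theorem AddSubmonoid.exists_inner_nonpos_of_convex [CompleteSpace E] (Q : AddSubmonoid E)
    (hQ : IsClosed (Q : Set E)) (hconv : Convex ℝ (Q : Set E)) (hQ_ne : Q ≠ ⊤) :
    ∃ l : E, ‖l‖ = 1 ∧ ∀ x ∈ Q, ⟪l, x⟫ ≤ 0 := by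
  obtain ⟨z, hz⟩ := SetLike.exists_not_mem_of_ne_top Q hQ_ne
  obtain ⟨f, u, hfQ, huz⟩ := geometric_hahn_banach_closed_point hconv hQ hz
  have hu : 0 < u := by simpa using hfQ 0 Q.zero_mem
  have hf_nonpos : ∀ x ∈ Q, f x ≤ 0 := fun x hx => by
    by_contra! h
    obtain ⟨n, hn⟩ := exists_nat_gt (u / f x)
    have := hfQ _ (Q.nsmul_mem hx n)
    rw [map_nsmul, nsmul_eq_mul, div_lt_iff₀ h] at *
    linarith
  set l₀ := (InnerProductSpace.toDual ℝ E).symm f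
  have hl₀ : l₀ ≠ 0 := by
    have hf : f ≠ 0 := by rintro rfl; simp only [zero_apply] at huz; linarith
    simpa [l₀] using hf
  refine ⟨‖l₀‖⁻¹ • l₀, by simp [norm_smul, hl₀], fun x hx => ?_⟩
  rw [real_inner_smul_left, InnerProductSpace.toDual_symm_apply]
  exact mul_nonpos_of_nonneg_of_nonpos (by positivity) (hf_nonpos x hx)

theorem AddSubmonoid.exists_coe_eq_setOf_inner_nonpos [CompleteSpace E] (Q : AddSubmonoid E)
    (hQ : IsClosed (Q : Set E)) (htotal : ∀ x, x ∈ Q ∨ -x ∈ Q) (hQ_ne : Q ≠ ⊤) :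
    ∃ l : E, ‖l‖ = 1 ∧ (Q : Set E) = {x | ⟪l, x⟫ ≤ 0} := by
  obtain ⟨l, hl, hlQ⟩ := Q.exists_inner_nonpos_of_convex hQ
    (Q.convex_of_isClosed_of_forall_mem_or_neg_mem hQ htotal) hQ_ne
  refine ⟨l, hl, subset_antisymm hlQ ?_⟩
  have hlt : {x | ⟪l, x⟫ < 0} ⊆ Q := fun x hx => by
    refine (htotal x).resolve_right fun h => ?_
    have := hlQ _ h
    rw [inner_neg_right] at this
    exact (not_lt_of_ge (neg_nonpos.1 this)) hx
  rw [← closure_setOf_inner_lt (norm_ne_zero_iff.1 (hl.trans_ne one_ne_zero))]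
  exact closure_minimal hlt hQ

theorem exists_eq_setOf_inner_le_of_isClosed {A : Set E} {l : E} (hl : l ≠ 0)
    (hA : IsClosed A) (hA_ne : A.Nonempty) (hA_ne_univ : A ≠ Set.univ)
    (hlower : ∀ a ∈ A, ∀ y, ⟪l, y⟫ ≤ ⟪l, a⟫ → y ∈ A) :
    ∃ t : ℝ, A = {y | ⟪l, y⟫ ≤ t} := by
  set B := (⟪l, ·⟫) '' A
  have hB : BddAbove B := by
    refine not_not.1 fun h => hA_ne_univ (Set.eq_univ_of_forall fun y => ?_)
    obtain ⟨_, ⟨a, ha, rfl⟩, hlt⟩ := not_bddAbove_iff.1 h ⟪l, y⟫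
    exact hlower a ha y hlt.le
  refine ⟨sSup B, subset_antisymm (fun y hy => le_csSup hB ⟨y, hy, rfl⟩) ?_⟩
  have hlt : {y | ⟪l, y⟫ < sSup B} ⊆ A := fun y hy => by
    obtain ⟨_, ⟨a, ha, rfl⟩, hlt⟩ := exists_lt_of_lt_csSup (hA_ne.image (⟪l, ·⟫)) hy
    exact hlower a ha y hlt.le
  rw [← closure_setOf_inner_lt hl]
  exact closure_minimal hlt hA

theorem eq_of_setOf_inner_le_eq {l l' : E} {t t' : ℝ} (hl : ‖l‖ = 1) (hl' : ‖l'‖ = 1)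
    (h : {y | ⟪l, y⟫ ≤ t} = {y | ⟪l', y⟫ ≤ t'}) : l = l' ∧ t = t' := by
  have hmem : ∀ y, ⟪l, y⟫ ≤ t ↔ ⟪l', y⟫ ≤ t' := fun y => Set.ext_iff.1 h y
  have hll : ⟪l, l⟫ = 1 := by rw [real_inner_self_eq_norm_sq, hl, one_pow]
  have hl'l' : ⟪l', l'⟫ = 1 := by rw [real_inner_self_eq_norm_sq, hl', one_pow]
  have hc : 1 - ⟪l, l'⟫ = 0 := by
    by_contra hc
    -- along `l' - l` the two functionals are `∓ (1 - ⟪l, l'⟫)`, so a far point separates them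
    obtain ⟨k, hk_def⟩ : ∃ k : ℝ, k = |t| + |t'| + 1 := ⟨_, rfl⟩
    have hy := hmem ((k / (1 - ⟪l, l'⟫)) • (l' - l))
    simp only [real_inner_smul_right, inner_sub_right, hll, hl'l', real_inner_comm l l'] at hy
    have hk : k / (1 - ⟪l, l'⟫) * (⟪l, l'⟫ - 1) = -k := by field_simp; ring
    have hk' : k / (1 - ⟪l, l'⟫) * (1 - ⟪l, l'⟫) = k := by field_simp
    rw [hk, hk'] at hy
    linarith [hy.1 (by linarith [neg_abs_le t, abs_nonneg t']), le_abs_self t', abs_nonneg t]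
  have hl_eq : l = l' := by
    rw [← sub_eq_zero, ← norm_eq_zero, ← sq_eq_zero_iff, norm_sub_sq_real, hl, hl']
    linarith
  subst hl_eq
  have ht := hmem (t • l)
  have ht' := hmem (t' • l)
  simp only [real_inner_smul_right, hll, mul_one, le_refl, true_iff, iff_true] at ht ht'
  exact ⟨rfl, le_antisymm ht ht'⟩

end InnerProductSpace

section TranslationSubmonoid

variable {E : Type*} [AddCommGroup E]

def translationSubmonoid (A : Set E) : AddSubmonoid E where
  carrier := {x | ∀ a ∈ A, a + x ∈ A}
  zero_mem' a ha := by rwa [add_zero]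
  add_mem' hx hy a ha := by rw [← add_assoc]; exact hy _ (hx a ha)

variable {A : Set E}

theorem mem_translationSubmonoid {x : E} : x ∈ translationSubmonoid A ↔ ∀ a ∈ A, a + x ∈ A :=
  Iff.rfl

theorem mem_of_sub_mem_translationSubmonoid {a y : E} (ha : a ∈ A)
    (h : y - a ∈ translationSubmonoid A) : y ∈ A := by
  simpa using h a ha

theorem translationSubmonoid_ne_top (hA_ne : A.Nonempty) (hA_ne_univ : A ≠ Set.univ) :
    translationSubmonoid A ≠ ⊤ := fun h => by
  obtain ⟨a, ha⟩ := hA_ne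
  exact hA_ne_univ <| Set.eq_univ_of_forall fun y =>
    mem_of_sub_mem_translationSubmonoid ha (h ▸ AddSubmonoid.mem_top _)

theorem mem_or_neg_mem_translationSubmonoid
    (hcomp : ∀ x, (· + x) '' A ⊆ A ∨ A ⊆ (· + x) '' A) (x : E) :
    x ∈ translationSubmonoid A ∨ -x ∈ translationSubmonoid A := by
  refine (hcomp x).imp (fun h a ha => h ⟨a, ha, rfl⟩) fun h a ha => ?_
  obtain ⟨b, hb, rfl⟩ := h ha
  simpa using hb

theorem isClosed_translationSubmonoid [TopologicalSpace E] [ContinuousAdd E] (hA : IsClosed A) :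
    IsClosed (translationSubmonoid A : Set E) := by
  have : (translationSubmonoid A : Set E) = ⋂ a ∈ A, (a + ·) ⁻¹' A := by
    ext x; simp [mem_translationSubmonoid]
  rw [this]
  exact isClosed_biInter fun a _ => hA.preimage (continuous_const_add a)

end TranslationSubmonoid

theorem stmt_0_general {d : ℕ}
    (P : Set (EuclideanSpace ℝ (Fin d)))
    (A : Set (EuclideanSpace ℝ (Fin d)))
    (hAclosed : IsClosed A) (hAne : A.Nonempty) (hAnuniv : A ≠ Set.univ)
    (hAinv : -P + A ⊆ A)
    (hAcomp : ∀ x : EuclideanSpace ℝ (Fin d),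
      ((· + x) '' A ⊆ A) ∨ (A ⊆ (· + x) '' A)) :
    ∃! lt : EuclideanSpace ℝ (Fin d) × ℝ,
      ‖lt.1‖ = 1 ∧ (∀ x ∈ P, 0 ≤ (inner ℝ lt.1 x : ℝ)) ∧
      A = {y | (inner ℝ lt.1 y : ℝ) ≤ lt.2} := by
  obtain ⟨l, hl, hQ⟩ := (translationSubmonoid A).exists_coe_eq_setOf_inner_nonpos
    (isClosed_translationSubmonoid hAclosed) (mem_or_neg_mem_translationSubmonoid hAcomp)
    (translationSubmonoid_ne_top hAne hAnuniv)
  have hmem : ∀ x, x ∈ translationSubmonoid A ↔ ⟪l, x⟫ ≤ 0 := fun x => Set.ext_iff.1 hQ x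
  have hlP : ∀ p ∈ P, 0 ≤ ⟪l, p⟫ := fun p hp => by
    have : -p ∈ translationSubmonoid A := fun a ha =>
      hAinv ⟨-p, Set.neg_mem_neg.2 hp, a, ha, add_comm _ _⟩
    simpa [inner_neg_right] using (hmem _).1 this
  have hlower : ∀ a ∈ A, ∀ y, ⟪l, y⟫ ≤ ⟪l, a⟫ → y ∈ A := fun a ha y hy =>
    mem_of_sub_mem_translationSubmonoid ha <| (hmem _).2 <| by
      rw [inner_sub_right]; linarith
  obtain ⟨t, hAt⟩ := exists_eq_setOf_inner_le_of_isClosed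
    (norm_ne_zero_iff.1 (hl.trans_ne one_ne_zero)) hAclosed hAne hAnuniv hlower
  refine ⟨(l, t), ⟨hl, hlP, hAt⟩, ?_⟩
  rintro ⟨l', t'⟩ ⟨hl', -, hAt'⟩
  obtain ⟨rfl, rfl⟩ := eq_of_setOf_inner_le_eq hl' hl (hAt'.symm.trans hAt)
  rfl

/-- Let `P` be a closed convex cone in `ℝ^d` that is spanning and
pointed. Let `A ⊆ ℝ^d` be a closed set with `∅ ≠ A ≠ ℝ^d` and `-P + A ⊆ A`, and suppose
that for every `x ∈ ℝ^d` either `A + x ⊆ A` or `A ⊆ A + x`. Then there exist a unique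
vector `l ∈ ℝ^d` with `‖l‖ = 1` and `⟨l|x⟩ ≥ 0` for all `x ∈ P`, and a unique real
number `t`, such that `A = {y : ⟨l|y⟩ ≤ t}`. -/
theorem stmt_0 {d : ℕ}
    (P : Set (EuclideanSpace ℝ (Fin d)))
    (hPclosed : IsClosed P) (hPconvex : Convex ℝ P)
    (hPcone : ∀ (c : ℝ), 0 ≤ c → ∀ x ∈ P, c • x ∈ P)
    (hPspan : P - P = Set.univ)
    (hPpointed : P ∩ (-P) = {0})
    (A : Set (EuclideanSpace ℝ (Fin d)))
    (hAclosed : IsClosed A) (hAne : A.Nonempty) (hAnuniv : A ≠ Set.univ)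
    (hAinv : -P + A ⊆ A)
    (hAcomp : ∀ x : EuclideanSpace ℝ (Fin d),
      ((· + x) '' A ⊆ A) ∨ (A ⊆ (· + x) '' A)) :
    ∃! lt : EuclideanSpace ℝ (Fin d) × ℝ,
      ‖lt.1‖ = 1 ∧ (∀ x ∈ P, 0 ≤ (inner ℝ lt.1 x : ℝ)) ∧
      A = {y | (inner ℝ lt.1 y : ℝ) ≤ lt.2} :=
  stmt_0_general P A hAclosed hAne hAnuniv hAinv hAcomp
end

section
/- Let P be a closed convex cone in ℝ^d that is spanning (P − P = ℝ^d) and pointed (P ∩ (−P) = {0}). Let Q ⊆ ℝ^d be a closed set with Q ≠ ℝ^d, −P ⊆ Q, Q + Q ⊆ Q, and Q ∪ (−Q) = ℝ^d. Then there exists a unique λ ∈ ℝ^d with ‖λ‖ = 1 and ⟨λ|x⟩ ≥ 0 for all x ∈ P such that Q = {y ∈ ℝ^d : ⟨λ|y⟩ ≤ 0}. -/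
/-!
The ray `{s ≥ 0 | s • x ∈ Q}` through a point `x ∈ Q` is a closed additive submonoid of `ℝ`
containing `1`, and it is closed under halving: if `x / 2 ∉ Q` then `-(x / 2) ∈ Q` and so
`x / 2 = x + (-(x / 2)) ∈ Q`. Dyadic rationals being dense, `Q` is a closed convex cone. A closed
convex cone missing a point lies in a closed half-space `{f ≤ 0}` (Hahn–Banach); totality gives
`{f < 0} ⊆ Q`, and taking closures `Q = {f ≤ 0}`. Riesz representation and normalisation turn `f`
into the unit vector `l`, and two unit vectors with the same half-space coincide.
-/

open Pointwise Set Filter Topology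
open scoped RealInnerProductSpace

theorem AddSubmonoid.mem_of_nonneg_of_isClosed_of_half_mem {S : AddSubmonoid ℝ}
    (hS : IsClosed (S : Set ℝ)) (h1 : (1 : ℝ) ∈ S) (hhalf : ∀ s ∈ S, s / 2 ∈ S)
    {r : ℝ} (hr : 0 ≤ r) : r ∈ S := by
  have hdyadic : ∀ k : ℕ, ((2 : ℝ) ^ k)⁻¹ ∈ S := by
    intro k
    induction k with
    | zero => simpa using h1
    | succ k ih =>
      rw [pow_succ, mul_inv, ← div_eq_mul_inv]
      exact hhalf _ ih
  have hlim : Tendsto (fun k : ℕ => (⌊r * 2 ^ k⌋₊ : ℝ) / 2 ^ k) atTop (𝓝 r) :=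
    (tendsto_nat_floor_mul_div_atTop hr).comp (tendsto_pow_atTop_atTop_of_one_lt one_lt_two)
  refine hS.mem_of_tendsto hlim (Eventually.of_forall fun k => ?_)
  simpa [nsmul_eq_mul, div_eq_mul_inv] using S.nsmul_mem (hdyadic k) ⌊r * 2 ^ k⌋₊

section TotalAddClosed

variable {E : Type*} [AddCommGroup E] {Q : Set E}

theorem zero_mem_of_union_neg_eq_univ (htot : Q ∪ -Q = univ) : (0 : E) ∈ Q := by
  simpa using htot.symm.subset (mem_univ (0 : E))

theorem neg_mem_of_union_neg_eq_univ (htot : Q ∪ -Q = univ) {x : E} (hx : x ∉ Q) : -x ∈ Q := by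
  simpa [hx] using htot.symm.subset (mem_univ x)

variable [Module ℝ E]

theorem inv_two_smul_mem_of_add_subset (hadd : Q + Q ⊆ Q) (htot : Q ∪ -Q = univ) {x : E}
    (hx : x ∈ Q) : (2⁻¹ : ℝ) • x ∈ Q := by
  by_contra h
  have := hadd (add_mem_add hx (neg_mem_of_union_neg_eq_univ htot h))
  rw [show x + -((2⁻¹ : ℝ) • x) = (2⁻¹ : ℝ) • x by module] at this
  exact h this

variable [TopologicalSpace E] [ContinuousSMul ℝ E]

theorem smul_mem_of_add_subset (hQ : IsClosed Q) (hadd : Q + Q ⊆ Q) (htot : Q ∪ -Q = univ)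
    {x : E} (hx : x ∈ Q) {r : ℝ} (hr : 0 ≤ r) : r • x ∈ Q := by
  let S : AddSubmonoid ℝ :=
    { carrier := {s | s • x ∈ Q}
      zero_mem' := by simpa using zero_mem_of_union_neg_eq_univ htot
      add_mem' := fun hs ht => by simpa [add_smul] using hadd (add_mem_add hs ht) }
  refine S.mem_of_nonneg_of_isClosed_of_half_mem
    (hQ.preimage (continuous_id.smul continuous_const)) (by simpa [S] using hx) (fun s hs => ?_) hr
  simpa [S, div_eq_inv_mul, mul_smul] using inv_two_smul_mem_of_add_subset hadd htot hs

theorem convex_of_add_subset (hQ : IsClosed Q) (hadd : Q + Q ⊆ Q) (htot : Q ∪ -Q = univ) :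
    Convex ℝ Q := fun _ hx _ hy _ _ ha hb _ =>
  hadd (add_mem_add (smul_mem_of_add_subset hQ hadd htot hx ha)
    (smul_mem_of_add_subset hQ hadd htot hy hb))

variable [IsTopologicalAddGroup E] [LocallyConvexSpace ℝ E]

theorem exists_strongDual_eq_setOf_nonpos (hQ : IsClosed Q) (hadd : Q + Q ⊆ Q)
    (htot : Q ∪ -Q = univ) (hQne : Q ≠ univ) :
    ∃ f : StrongDual ℝ E, f ≠ 0 ∧ Q = {x | f x ≤ 0} := by
  obtain ⟨p, hp⟩ := (ne_univ_iff_exists_notMem Q).mp hQne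
  obtain ⟨f, u, hfQ, hfp⟩ :=
    geometric_hahn_banach_closed_point (convex_of_add_subset hQ hadd htot) hQ hp
  have hu : 0 < u := by simpa using hfQ 0 (zero_mem_of_union_neg_eq_univ htot)
  have hf0 : f ≠ 0 := by
    rintro rfl
    exact (hu.trans hfp).ne rfl
  have hnonpos : Q ⊆ {x | f x ≤ 0} := by
    intro x hx
    show f x ≤ 0
    by_contra! hpos
    have := hfQ _ (smul_mem_of_add_subset hQ hadd htot hx (div_nonneg hu.le hpos.le))
    rw [map_smul, smul_eq_mul, div_mul_cancel₀ _ hpos.ne'] at this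
    exact this.false
  have hneg : f ⁻¹' Iio 0 ⊆ Q := by
    intro x hx
    by_contra h
    have := hnonpos (neg_mem_of_union_neg_eq_univ htot h)
    simp only [mem_ofPred_eq, map_neg, neg_nonpos] at this
    exact (lt_of_lt_of_le hx this).false
  refine ⟨f, hf0, hnonpos.antisymm ?_⟩
  change f ⁻¹' Iic 0 ⊆ Q
  rw [← closure_Iio,
    (f.isOpenMap_of_ne_zero hf0).preimage_closure_eq_closure_preimage f.continuous]
  exact closure_minimal hneg hQ

end TotalAddClosed

section InnerProduct

variable {E : Type*} [NormedAddCommGroup E] [InnerProductSpace ℝ E]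

theorem eq_of_norm_eq_of_setOf_inner_nonpos_subset {l l' : E} (hnorm : ‖l‖ = ‖l'‖)
    (h : {y | ⟪l, y⟫ ≤ 0} ⊆ {y | ⟪l', y⟫ ≤ 0}) : l = l' := by
  have hl : ⟪l, l' - l⟫ ≤ 0 := by
    have := real_inner_le_norm l l'
    rw [← hnorm] at this
    rw [inner_sub_right, real_inner_self_eq_norm_sq, sq]
    linarith
  have hl' : ⟪l', l' - l⟫ ≤ 0 := h hl
  rw [inner_sub_right, real_inner_self_eq_norm_sq, real_inner_comm] at hl'
  have hsq : ‖l - l'‖ ^ 2 ≤ 0 := by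
    rw [norm_sub_sq_real, hnorm]
    linarith
  exact sub_eq_zero.mp (norm_eq_zero.mp (by nlinarith [norm_nonneg (l - l')]))

variable [CompleteSpace E]

theorem exists_norm_eq_one_eq_setOf_inner_nonpos {Q : Set E} (hQ : IsClosed Q)
    (hadd : Q + Q ⊆ Q) (htot : Q ∪ -Q = univ) (hQne : Q ≠ univ) :
    ∃ l : E, ‖l‖ = 1 ∧ Q = {y | ⟪l, y⟫ ≤ 0} := by
  obtain ⟨f, hf0, rfl⟩ := exists_strongDual_eq_setOf_nonpos hQ hadd htot hQne
  set v := (InnerProductSpace.toDual ℝ E).symm f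
  have hv : v ≠ 0 := by simpa [v] using hf0
  refine ⟨‖v‖⁻¹ • v, norm_smul_inv_norm hv, ?_⟩
  ext y
  simp only [mem_ofPred_eq, real_inner_smul_left, v, InnerProductSpace.toDual_symm_apply]
  rw [← smul_eq_mul, smul_nonpos_iff_nonpos_of_pos_left (inv_pos.mpr (norm_pos_iff.mpr hv))]

end InnerProduct

theorem stmt_1_general {d : ℕ}
    (P : Set (EuclideanSpace ℝ (Fin d)))
    (Q : Set (EuclideanSpace ℝ (Fin d)))
    (hQclosed : IsClosed Q) (hQnuniv : Q ≠ Set.univ)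
    (hPQ : -P ⊆ Q) (hQadd : Q + Q ⊆ Q) (hQtot : Q ∪ (-Q) = Set.univ) :
    ∃! l : EuclideanSpace ℝ (Fin d),
      ‖l‖ = 1 ∧ (∀ x ∈ P, 0 ≤ (inner ℝ l x : ℝ)) ∧
      Q = {y | (inner ℝ l y : ℝ) ≤ 0} := by
  obtain ⟨l, hl, hQ⟩ := exists_norm_eq_one_eq_setOf_inner_nonpos hQclosed hQadd hQtot hQnuniv
  refine ⟨l, ⟨hl, fun x hx => ?_, hQ⟩, fun l' ⟨hl', _, hQ'⟩ => ?_⟩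
  · have : ⟪l, -x⟫ ≤ 0 := by
      have := hPQ (neg_mem_neg.mpr hx)
      rwa [hQ] at this
    simpa [inner_neg_right] using this
  · exact eq_of_norm_eq_of_setOf_inner_nonpos_subset (hl'.trans hl.symm)
      (hQ'.symm.trans hQ).subset

/-- Let `P` be a closed convex cone in `ℝ^d` that is spanning and
pointed. Let `Q ⊆ ℝ^d` be a closed set with `Q ≠ ℝ^d`, `-P ⊆ Q`, `Q + Q ⊆ Q`, and
`Q ∪ (-Q) = ℝ^d`. Then there exists a unique `l ∈ ℝ^d` with `‖l‖ = 1` and `⟨l|x⟩ ≥ 0`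
for all `x ∈ P` such that `Q = {y : ⟨l|y⟩ ≤ 0}`. -/
theorem stmt_1 {d : ℕ}
    (P : Set (EuclideanSpace ℝ (Fin d)))
    (hPclosed : IsClosed P) (hPconvex : Convex ℝ P)
    (hPcone : ∀ (c : ℝ), 0 ≤ c → ∀ x ∈ P, c • x ∈ P)
    (hPspan : P - P = Set.univ)
    (hPpointed : P ∩ (-P) = {0})
    (Q : Set (EuclideanSpace ℝ (Fin d)))
    (hQclosed : IsClosed Q) (hQnuniv : Q ≠ Set.univ)
    (hPQ : -P ⊆ Q) (hQadd : Q + Q ⊆ Q) (hQtot : Q ∪ (-Q) = Set.univ) :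
    ∃! l : EuclideanSpace ℝ (Fin d),
      ‖l‖ = 1 ∧ (∀ x ∈ P, 0 ≤ (inner ℝ l x : ℝ)) ∧
      Q = {y | (inner ℝ l y : ℝ) ≤ 0} :=
  stmt_1_general P Q hQclosed hQnuniv hPQ hQadd hQtot
end

section
/- Let P be a closed convex cone in ℝ^d that is spanning (P − P = ℝ^d) and pointed (P ∩ (−P) = {0}). Let Q ⊆ ℝ^d be a closed set with Q ≠ ℝ^d, −P ⊆ Q, Q + Q ⊆ Q, and Q ∪ (−Q) = ℝ^d. Then the topological boundary of Q equals Q ∩ (−Q). -/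
open Pointwise

/-- Let `P` be a closed convex cone in `ℝ^d` that is spanning and
pointed. Let `Q ⊆ ℝ^d` be a closed set with `Q ≠ ℝ^d`, `-P ⊆ Q`, `Q + Q ⊆ Q`, and
`Q ∪ (-Q) = ℝ^d`. Then the topological boundary of `Q` equals `Q ∩ (-Q)`. -/
theorem stmt_2 {d : ℕ}
    (P : Set (EuclideanSpace ℝ (Fin d)))
    (hPclosed : IsClosed P) (hPconvex : Convex ℝ P)
    (hPcone : ∀ (c : ℝ), 0 ≤ c → ∀ x ∈ P, c • x ∈ P)
    (hPspan : P - P = Set.univ)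
    (hPpointed : P ∩ (-P) = {0})
    (Q : Set (EuclideanSpace ℝ (Fin d)))
    (hQclosed : IsClosed Q) (hQnuniv : Q ≠ Set.univ)
    (hPQ : -P ⊆ Q) (hQadd : Q + Q ⊆ Q) (hQtot : Q ∪ (-Q) = Set.univ) :
    frontier Q = Q ∩ (-Q) := by
  -- interior Q + Q ⊆ interior Q
  have hsum : interior Q + Q ⊆ interior Q := by
    have hopen : IsOpen (interior Q + Q) := isOpen_interior.add_right
    have hsub : interior Q + Q ⊆ Q :=
      (Set.add_subset_add_right interior_subset).trans hQadd
    exact interior_maximal hsub hopen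
  -- nsmul stays in Q
  have hmul : ∀ m : ℕ, ∀ z ∈ Q, (m + 1) • z ∈ Q := by
    intro m
    induction m with
    | zero => intro z hz; simpa using hz
    | succ k ih =>
      intro z hz
      have : (k + 1) • z + z ∈ Q := hQadd (Set.add_mem_add (ih z hz) hz)
      simpa [succ_nsmul] using this
  -- no point of interior Q lies in -Q
  have hdisj : ∀ x, x ∈ interior Q → x ∉ -Q := by
    intro x hx hxn
    have hxn' : -x ∈ Q := Set.mem_neg.mp hxn
    have h0 : (0 : EuclideanSpace ℝ (Fin d)) ∈ interior Q := by
      have := hsum (Set.add_mem_add hx hxn')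
      simpa using this
    apply hQnuniv
    ext y
    simp only [Set.mem_univ, iff_true]
    have htend : Filter.Tendsto (fun n : ℕ => (n : ℝ)⁻¹ • y)
        Filter.atTop (nhds 0) := by
      have h1 : Filter.Tendsto (fun n : ℕ => (n : ℝ)⁻¹) Filter.atTop (nhds 0) :=
        tendsto_inv_atTop_zero.comp tendsto_natCast_atTop_atTop
      simpa using h1.smul_const y
    have hev := htend.eventually (isOpen_interior.mem_nhds h0)
    obtain ⟨n, hnQ, hn1⟩ := (hev.and (Filter.eventually_ge_atTop 1)).exists
    obtain ⟨m, rfl⟩ := Nat.exists_eq_add_of_le hn1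
    have h' : ((m : ℝ) + 1)⁻¹ • y ∈ Q := by
      have : (((1 + m : ℕ) : ℝ))⁻¹ • y ∈ Q := interior_subset hnQ
      push_cast at this
      simpa [add_comm] using this
    have hz : (m + 1) • (((m : ℝ) + 1)⁻¹ • y) ∈ Q := hmul m _ h'
    have hne : ((m : ℝ) + 1) ≠ 0 := by positivity
    rwa [← Nat.cast_smul_eq_nsmul ℝ, Nat.cast_add, Nat.cast_one,
      smul_inv_smul₀ hne] at hz
  -- Q \ -Q is open, hence ⊆ interior Q
  have hin : Q \ (-Q) ⊆ interior Q := by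
    have hopen : IsOpen ((-Q)ᶜ) := hQclosed.neg.isOpen_compl
    have hsub : (-Q)ᶜ ⊆ Q := by
      intro x hx
      rcases (hQtot ▸ Set.mem_univ x : x ∈ Q ∪ (-Q)) with h | h
      · exact h
      · exact absurd h hx
    exact fun x hx => interior_maximal hsub hopen hx.2
  have hint : interior Q = Q \ (-Q) := by
    apply le_antisymm
    · exact fun x hx => ⟨interior_subset hx, hdisj x hx⟩
    · exact hin
  rw [hQclosed.frontier_eq, hint]
  ext x
  simp only [Set.mem_diff, Set.mem_inter_iff]
  tauto
end

section
/- Let λ ∈ ℝ^d be a nonzero vector and let H = {y ∈ ℝ^d : ⟨λ|y⟩ ≤ 0} be the corresponding closed half-space. Let A ⊆ ℝ^d be a closed set with ∅ ≠ A ≠ ℝ^d and H + A ⊆ A. Then there exists t ∈ ℝ such that A = {y ∈ ℝ^d : ⟨λ|y⟩ ≤ t}; in particular A is a translate of H. -/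
open Pointwise Set

/-!
Absorbing the half-space `{f ≤ 0}` makes `A` a down-set for `f`: whether `y ∈ A` depends only on
`f y`, and the values `f '' A` form a lower set of `ℝ`. That lower set is closed, since it is the
preimage of `A` under the line `s ↦ s • v` with `f v = 1`; being nonempty and proper, it is an
interval `Iic t`, and hence `A = {f ≤ t}`.
-/

theorem IsLowerSet.bddAbove_of_ne_univ {α : Type*} [LinearOrder α] {S : Set α}
    (hS : IsLowerSet S) (hSuniv : S ≠ univ) : BddAbove S := by
  obtain ⟨x, hx⟩ := ne_univ_iff_exists_notMem S |>.mp hSuniv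
  exact ⟨x, fun s hs => le_of_not_ge fun hxs => hx (hS hxs hs)⟩

theorem IsLowerSet.eq_Iic_of_isClosed {α : Type*} [ConditionallyCompleteLinearOrder α]
    [TopologicalSpace α] [OrderTopology α] {S : Set α} (hS : IsLowerSet S) (hSclosed : IsClosed S)
    (hSne : S.Nonempty) (hSuniv : S ≠ univ) : ∃ t, S = Iic t := by
  have hbdd := hS.bddAbove_of_ne_univ hSuniv
  exact ⟨sSup S, Subset.antisymm (fun _ hs => le_csSup hbdd hs)
    (hS.Iic_subset (hSclosed.csSup_mem hSne hbdd))⟩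

section HalfSpace

variable {E : Type*} [AddCommGroup E] [Module ℝ E] {f : E →ₗ[ℝ] ℝ} {A : Set E}

theorem mem_of_le_of_halfSpace_add_subset (hA : {y | f y ≤ 0} + A ⊆ A) {a y : E} (ha : a ∈ A)
    (hy : f y ≤ f a) : y ∈ A := by
  have hmem : y - a + a ∈ {y | f y ≤ 0} + A :=
    add_mem_add (by simpa [map_sub] using hy) ha
  simpa using hA hmem

theorem isLowerSet_image_of_halfSpace_add_subset (hf : Function.Surjective f)
    (hA : {y | f y ≤ 0} + A ⊆ A) : IsLowerSet (f '' A) := by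
  rintro _ s hs ⟨a, ha, rfl⟩
  obtain ⟨y, rfl⟩ := hf s
  exact mem_image_of_mem f (mem_of_le_of_halfSpace_add_subset hA ha hs)

theorem eq_preimage_image_of_halfSpace_add_subset (hA : {y | f y ≤ 0} + A ⊆ A) :
    A = f ⁻¹' (f '' A) := by
  refine Subset.antisymm (subset_preimage_image f A) ?_
  rintro y ⟨a, ha, hya⟩
  exact mem_of_le_of_halfSpace_add_subset hA ha hya.ge

theorem isClosed_image_of_halfSpace_add_subset [TopologicalSpace E] [ContinuousSMul ℝ E]
    (hf : Function.Surjective f) (hA : {y | f y ≤ 0} + A ⊆ A) (hAclosed : IsClosed A) :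
    IsClosed (f '' A) := by
  obtain ⟨v, hv⟩ := hf 1
  have hline : f '' A = (· • v) ⁻¹' A := by
    ext s
    calc s ∈ f '' A ↔ f (s • v) ∈ f '' A := by simp [hv]
      _ ↔ s • v ∈ A := by rw [← mem_preimage, ← eq_preimage_image_of_halfSpace_add_subset hA]
  rw [hline]
  exact hAclosed.preimage (continuous_id.smul continuous_const)

theorem exists_eq_setOf_le_of_halfSpace_add_subset [TopologicalSpace E] [ContinuousSMul ℝ E]
    (hf : f ≠ 0) (hAclosed : IsClosed A) (hAne : A.Nonempty) (hAuniv : A ≠ univ)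
    (hA : {y | f y ≤ 0} + A ⊆ A) : ∃ t, A = {y | f y ≤ t} := by
  have hsurj : Function.Surjective f := LinearMap.surjective_of_ne_zero hf
  have hsat := eq_preimage_image_of_halfSpace_add_subset hA
  obtain ⟨t, ht⟩ := (isLowerSet_image_of_halfSpace_add_subset hsurj hA).eq_Iic_of_isClosed
    (isClosed_image_of_halfSpace_add_subset hsurj hA hAclosed) (hAne.image f)
    (fun h => hAuniv (by rw [hsat, h, preimage_univ]))
  exact ⟨t, by rw [hsat, ht]; rfl⟩

theorem setOf_le_eq_image_add_setOf_nonpos {z : E} :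
    {y | f y ≤ f z} = (· + z) '' {y | f y ≤ 0} := by
  ext y
  simp [image_add_right]

end HalfSpace

/-- Let `l ∈ ℝ^d` be nonzero and `H = {y : ⟨l|y⟩ ≤ 0}` the
corresponding closed half-space. Let `A ⊆ ℝ^d` be closed with `∅ ≠ A ≠ ℝ^d` and
`H + A ⊆ A`. Then there exists `t ∈ ℝ` such that `A = {y : ⟨l|y⟩ ≤ t}`; in particular
`A` is a translate of `H`. -/
theorem stmt_4 {d : ℕ}
    (l : EuclideanSpace ℝ (Fin d)) (hl : l ≠ 0)
    (A : Set (EuclideanSpace ℝ (Fin d)))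
    (hAclosed : IsClosed A) (hAne : A.Nonempty) (hAnuniv : A ≠ Set.univ)
    (hHA : {y : EuclideanSpace ℝ (Fin d) | (inner ℝ l y : ℝ) ≤ 0} + A ⊆ A) :
    ∃ t : ℝ, A = {y | (inner ℝ l y : ℝ) ≤ t} ∧
      ∃ z : EuclideanSpace ℝ (Fin d),
        A = (· + z) '' {y : EuclideanSpace ℝ (Fin d) | (inner ℝ l y : ℝ) ≤ 0} := by
  set f := innerₛₗ ℝ l
  have hf : f ≠ 0 := fun h => hl (inner_self_eq_zero.mp (LinearMap.congr_fun h l))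
  obtain ⟨t, hA⟩ := exists_eq_setOf_le_of_halfSpace_add_subset hf hAclosed hAne hAnuniv hHA
  obtain ⟨z, rfl⟩ := LinearMap.surjective_of_ne_zero hf t
  exact ⟨f z, hA, z, hA.trans setOf_le_eq_image_add_setOf_nonpos⟩
end

section
/- Let Y be a locally compact, second countable, Hausdorff topological space, and let μ be a Borel measure on Y × ℝ that is finite on compact sets and invariant under all translations in the second coordinate, i.e. the pushforward of μ under (y, t) ↦ (y, t + s) equals μ for every s ∈ ℝ. Then the set {((y, s), (z, t)) ∈ (Y × ℝ) × (Y × ℝ) : s = t} has measure zero with respect to the product measure μ × μ. -/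
open MeasureTheory

lemma slice_zero {Y : Type*} [TopologicalSpace Y] [LocallyCompactSpace Y]
    [SecondCountableTopology Y] [T2Space Y] [MeasurableSpace Y] [BorelSpace Y]
    (μ : Measure (Y × ℝ)) [IsFiniteMeasureOnCompacts μ]
    (hinv : ∀ s : ℝ, Measure.map (fun p : Y × ℝ => (p.1, p.2 + s)) μ = μ)
    (t : ℝ) : μ {p : Y × ℝ | p.2 = t} = 0 := by
  have hmeas : ∀ s : ℝ, Measurable fun p : Y × ℝ => (p.1, p.2 + s) :=
    fun s => (measurable_fst.prodMk (measurable_snd.add_const s))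
  -- translation invariance: measure of slice at t equals slice at 0
  have hshift : ∀ (t s : ℝ), μ {p : Y × ℝ | p.2 = t} = μ {p : Y × ℝ | p.2 = t + s} := by
    intro t s
    have hset : MeasurableSet {p : Y × ℝ | p.2 = t + s} :=
      measurable_snd (measurableSet_singleton (t + s))
    calc μ {p : Y × ℝ | p.2 = t}
        = μ ((fun p : Y × ℝ => (p.1, p.2 + s)) ⁻¹' {p : Y × ℝ | p.2 = t + s}) := by
          congr 1
          ext p
          simp
      _ = (Measure.map (fun p : Y × ℝ => (p.1, p.2 + s)) μ) {p : Y × ℝ | p.2 = t + s} :=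
          (Measure.map_apply (hmeas s) hset).symm
      _ = μ {p : Y × ℝ | p.2 = t + s} := by rw [hinv s]
  -- reduce to compact K : measure of K ×ˢ {t} is zero
  have hK : ∀ (K : Set Y), IsCompact K → ∀ u : ℝ, μ (K ×ˢ {u}) = 0 := by
    intro K hKc u
    have hKm : MeasurableSet K := hKc.isClosed.measurableSet
    have hKshift : ∀ (a b : ℝ), μ (K ×ˢ {a}) = μ (K ×ˢ {b}) := by
      intro a b
      have hset : MeasurableSet (K ×ˢ ({b} : Set ℝ)) :=
        hKm.prod (measurableSet_singleton b)
      have : (fun p : Y × ℝ => (p.1, p.2 + (b - a))) ⁻¹' (K ×ˢ {b}) = K ×ˢ {a} := by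
        ext ⟨y, r⟩
        simp only [Set.mem_preimage, Set.mem_prod, Set.mem_singleton_iff]
        constructor
        · rintro ⟨hy, hr⟩; exact ⟨hy, by linarith⟩
        · rintro ⟨hy, hr⟩; exact ⟨hy, by linarith⟩
      calc μ (K ×ˢ {a}) = μ ((fun p : Y × ℝ => (p.1, p.2 + (b - a))) ⁻¹' (K ×ˢ {b})) := by
            rw [this]
        _ = (Measure.map (fun p : Y × ℝ => (p.1, p.2 + (b - a))) μ) (K ×ˢ {b}) :=
            (Measure.map_apply (hmeas _) hset).symm
        _ = μ (K ×ˢ {b}) := by rw [hinv]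
    -- countably many disjoint translates inside a compact set
    set c := μ (K ×ˢ ({u} : Set ℝ)) with hc
    by_contra hne
    have hconst : ∀ n : ℕ, μ (K ×ˢ ({((n : ℝ) + 1)⁻¹} : Set ℝ)) = c := fun n => hKshift _ u
    have hdisj : Pairwise (Function.onFun Disjoint
        fun n : ℕ => K ×ˢ ({((n : ℝ) + 1)⁻¹} : Set ℝ)) := by
      intro m n hmn
      apply Set.disjoint_left.2
      rintro ⟨y, r⟩ ⟨_, hr1⟩ ⟨_, hr2⟩
      simp only [Set.mem_singleton_iff] at hr1 hr2
      apply hmn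
      have : ((m : ℝ) + 1)⁻¹ = ((n : ℝ) + 1)⁻¹ := hr1.symm.trans hr2
      have := inv_injective this
      exact_mod_cast (by linarith : (m : ℝ) = n)
    have hmeasn : ∀ n : ℕ, MeasurableSet (K ×ˢ ({((n : ℝ) + 1)⁻¹} : Set ℝ)) :=
      fun n => hKm.prod (measurableSet_singleton _)
    have hsub : (⋃ n : ℕ, K ×ˢ ({((n : ℝ) + 1)⁻¹} : Set ℝ)) ⊆ K ×ˢ Set.Icc (0 : ℝ) 1 := by
      rintro ⟨y, r⟩ hp
      simp only [Set.mem_iUnion, Set.mem_prod, Set.mem_singleton_iff] at hp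
      obtain ⟨n, hy, hr⟩ := hp
      refine ⟨hy, ?_⟩
      subst hr
      constructor
      · positivity
      · rw [inv_le_one_iff₀]; right; linarith [Nat.cast_nonneg (α := ℝ) n]
    have hfin : μ (K ×ˢ Set.Icc (0 : ℝ) 1) < ⊤ :=
      (hKc.prod isCompact_Icc).measure_lt_top
    have hle : μ (⋃ n : ℕ, K ×ˢ ({((n : ℝ) + 1)⁻¹} : Set ℝ)) ≤ μ (K ×ˢ Set.Icc (0 : ℝ) 1) :=
      measure_mono hsub
    rw [measure_iUnion hdisj hmeasn] at hle
    simp only [hconst] at hle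
    rw [ENNReal.tsum_const_eq_top_of_ne_zero hne] at hle
    exact (lt_irrefl ⊤ (lt_of_le_of_lt hle hfin)).elim
  -- σ-compact exhaustion of Y
  have : {p : Y × ℝ | p.2 = t} = ⋃ n : ℕ, (compactCovering Y n) ×ˢ ({t} : Set ℝ) := by
    ext ⟨y, r⟩
    simp only [Set.mem_setOf_eq, Set.mem_iUnion, Set.mem_prod, Set.mem_singleton_iff]
    constructor
    · intro h
      obtain ⟨n, hn⟩ := Set.mem_iUnion.1
        ((iUnion_compactCovering Y).symm ▸ Set.mem_univ y)
      exact ⟨n, hn, h⟩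
    · rintro ⟨n, _, h⟩; exact h
  rw [this]
  exact measure_iUnion_null fun n => hK _ (isCompact_compactCovering Y n) t

/-- Let `Y` be a locally compact, second countable, Hausdorff space,
and let `μ` be a Borel measure on `Y × ℝ`, finite on compact sets, invariant under all
translations in the second coordinate. Then the set
`{((y,s),(z,t)) : s = t}` has measure zero with respect to the product measure `μ × μ`. -/
theorem stmt_7 {Y : Type*} [TopologicalSpace Y] [LocallyCompactSpace Y]
    [SecondCountableTopology Y] [T2Space Y] [MeasurableSpace Y] [BorelSpace Y]
    (μ : Measure (Y × ℝ)) [IsFiniteMeasureOnCompacts μ]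
    (hinv : ∀ s : ℝ, Measure.map (fun p : Y × ℝ => (p.1, p.2 + s)) μ = μ) :
    (μ.prod μ) {q : (Y × ℝ) × (Y × ℝ) | q.1.2 = q.2.2} = 0 := by
  have hS : MeasurableSet {q : (Y × ℝ) × (Y × ℝ) | q.1.2 = q.2.2} := by
    have : {q : (Y × ℝ) × (Y × ℝ) | q.1.2 = q.2.2} =
        (fun q : (Y × ℝ) × (Y × ℝ) => (q.1.2, q.2.2)) ⁻¹' Set.diagonal ℝ := by
      ext q; simp [Set.diagonal]
    rw [this]
    exact ((measurable_snd.comp measurable_fst).prodMk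
      (measurable_snd.comp measurable_snd)) isClosed_diagonal.measurableSet
  rw [Measure.prod_apply hS]
  have : ∀ x : Y × ℝ, μ (Prod.mk x ⁻¹' {q : (Y × ℝ) × (Y × ℝ) | q.1.2 = q.2.2}) = 0 := by
    intro x
    have : Prod.mk x ⁻¹' {q : (Y × ℝ) × (Y × ℝ) | q.1.2 = q.2.2}
        = {p : Y × ℝ | p.2 = x.2} := by
      ext p; simp [eq_comm]
    rw [this]
    exact slice_zero μ hinv x.2
  simp only [this, lintegral_zero]
end

section
/- Let Y be a locally compact, second countable, Hausdorff topological space, and let μ be a Borel measure on Y × ℝ that is finite on compact sets and invariant under all translations in the second coordinate, i.e. the pushforward of μ under (y, t) ↦ (y, t + s) equals μ for every s ∈ ℝ. Then there exists a Borel measure ν₀ on Y, finite on compact sets, such that μ is the product measure ν₀ × m, where m is Lebesgue measure on ℝ. -/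
/-!
For a measurable `A ⊆ Y` contained in a compact set, `B ↦ μ (A ×ˢ B)` is a translation-invariant
measure on `ℝ` that is finite on compacts, hence a multiple of Lebesgue measure by uniqueness of
Haar measure; the factor is `ν₀ A := μ (A ×ˢ Ioc 0 1)`. So `μ` and `ν₀.prod volume` agree on such
rectangles, and on all rectangles after exhausting `Y` by interiors of compact sets.
-/

open MeasureTheory Measure Set

lemma CompactExhaustion.iUnion_interior {X : Type*} [TopologicalSpace X]
    (K : CompactExhaustion X) : ⋃ n, interior (K n) = univ :=
  iUnion_eq_univ_iff.2 fun x => (K.exists_mem_nhds x).imp fun _ => mem_interior_iff_mem_nhds.2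

lemma Real.eq_measure_Ioc_smul_volume (ρ : Measure ℝ) [IsFiniteMeasureOnCompacts ρ]
    [ρ.IsAddLeftInvariant] : ρ = ρ (Ioc 0 1) • volume := by
  rw [isAddLeftInvariant_eq_smul ρ volume]
  simp [Real.volume_Ioc]

namespace MeasureTheory.Measure

variable {X Z : Type*} [MeasurableSpace X] [MeasurableSpace Z]

lemma fst_restrict_univ_prod_apply (μ : Measure (X × Z)) (C : Set Z) {A : Set X}
    (hA : MeasurableSet A) : (μ.restrict (univ ×ˢ C)).fst A = μ (A ×ˢ C) := by
  rw [fst_apply hA, restrict_apply (measurable_fst hA), ← prod_univ, prod_inter_prod,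
    inter_univ, univ_inter]

lemma snd_restrict_prod_univ_apply (μ : Measure (X × Z)) (A : Set X) {C : Set Z}
    (hC : MeasurableSet C) : (μ.restrict (A ×ˢ univ)).snd C = μ (A ×ˢ C) := by
  rw [snd_apply hC, restrict_apply (measurable_snd hC), ← univ_prod, prod_inter_prod,
    inter_univ, univ_inter]

lemma isFiniteMeasureOnCompacts_fst_restrict_univ_prod [TopologicalSpace X]
    [OpensMeasurableSpace X] [WeaklyLocallyCompactSpace X] [TopologicalSpace Z]
    (μ : Measure (X × Z)) [IsFiniteMeasureOnCompacts μ] {C L : Set Z} (hL : IsCompact L)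
    (hCL : C ⊆ L) :
    IsFiniteMeasureOnCompacts (μ.restrict (univ ×ˢ C)).fst := by
  refine ⟨fun K hK => ?_⟩
  obtain ⟨K', hK', hKK'⟩ := exists_compact_superset hK
  calc (μ.restrict (univ ×ˢ C)).fst K
      ≤ (μ.restrict (univ ×ˢ C)).fst (interior K') := measure_mono hKK'
    _ = μ (interior K' ×ˢ C) := fst_restrict_univ_prod_apply μ C isOpen_interior.measurableSet
    _ ≤ μ (K' ×ˢ L) := measure_mono (Set.prod_mono interior_subset hCL)
    _ < ⊤ := (hK'.prod hL).measure_lt_top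

lemma isAddLeftInvariant_snd_restrict_prod_univ {G : Type*} [MeasurableSpace G]
    [AddCommMagma G] [MeasurableAdd G] {μ : Measure (X × G)}
    (hμ : ∀ s : G, map (fun p : X × G => (p.1, p.2 + s)) μ = μ) {A : Set X}
    (hA : MeasurableSet A) : (μ.restrict (A ×ˢ univ)).snd.IsAddLeftInvariant := by
  refine ⟨fun s => ext fun C hC => ?_⟩
  have hshift : Measurable fun p : X × G => (p.1, p.2 + s) :=
    measurable_fst.prodMk (measurable_snd.add_const s)
  rw [map_apply (measurable_const_add s) hC,
    snd_restrict_prod_univ_apply μ A (measurable_const_add s hC),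
    snd_restrict_prod_univ_apply μ A hC]
  conv_rhs => rw [← hμ s, map_apply hshift (hA.prod hC)]
  congr 1 with p
  simp [add_comm]

lemma measure_prod_eq_mul_volume [TopologicalSpace X] (μ : Measure (X × ℝ))
    [IsFiniteMeasureOnCompacts μ] (hμ : ∀ s : ℝ, map (fun p : X × ℝ => (p.1, p.2 + s)) μ = μ)
    {A K : Set X} (hA : MeasurableSet A) (hK : IsCompact K) (hAK : A ⊆ K)
    {B : Set ℝ} (hB : MeasurableSet B) :
    μ (A ×ˢ B) = μ (A ×ˢ Ioc 0 1) * volume B := by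
  set ρ := (μ.restrict (A ×ˢ univ)).snd
  have := isAddLeftInvariant_snd_restrict_prod_univ hμ hA
  have : IsFiniteMeasureOnCompacts ρ := ⟨fun C hC => by
    rw [snd_restrict_prod_univ_apply μ A hC.measurableSet]
    exact (measure_mono (Set.prod_mono hAK subset_rfl)).trans_lt (hK.prod hC).measure_lt_top⟩
  calc μ (A ×ˢ B) = ρ B := (snd_restrict_prod_univ_apply μ A hB).symm
    _ = (ρ (Ioc 0 1) • volume) B := by rw [← Real.eq_measure_Ioc_smul_volume ρ]
    _ = μ (A ×ˢ Ioc 0 1) * volume B := by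
      rw [smul_apply, smul_eq_mul, snd_restrict_prod_univ_apply μ A measurableSet_Ioc]

lemma measure_prod_eq_iSup_interior [TopologicalSpace X] (K : CompactExhaustion X)
    (μ : Measure (X × Z)) (A : Set X) (B : Set Z) :
    μ (A ×ˢ B) = ⨆ n, μ ((A ∩ interior (K n)) ×ˢ B) := by
  have hmono : Monotone fun n => (A ∩ interior (K n)) ×ˢ B := fun _ _ hmn =>
    Set.prod_mono (inter_subset_inter_right A (interior_mono (K.subset hmn))) subset_rfl
  rw [← hmono.measure_iUnion, ← iUnion_prod_const, ← inter_iUnion, K.iUnion_interior, inter_univ]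

end MeasureTheory.Measure

theorem stmt_8_general {Y : Type*} [TopologicalSpace Y] [LocallyCompactSpace Y]
    [SecondCountableTopology Y] [MeasurableSpace Y] [BorelSpace Y]
    (μ : Measure (Y × ℝ)) [IsFiniteMeasureOnCompacts μ]
    (hinv : ∀ s : ℝ, Measure.map (fun p : Y × ℝ => (p.1, p.2 + s)) μ = μ) :
    ∃ ν₀ : Measure Y, IsFiniteMeasureOnCompacts ν₀ ∧ μ = ν₀.prod volume := by
  set ν₀ := (μ.restrict (univ ×ˢ Ioc (0 : ℝ) 1)).fst
  have : IsFiniteMeasureOnCompacts ν₀ :=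
    isFiniteMeasureOnCompacts_fst_restrict_univ_prod μ isCompact_Icc Ioc_subset_Icc_self
  refine ⟨ν₀, this, (Measure.prod_eq fun A B hA hB => ?_).symm⟩
  let K := CompactExhaustion.choice Y
  rw [← prod_prod, measure_prod_eq_iSup_interior K μ, measure_prod_eq_iSup_interior K]
  refine iSup_congr fun n => ?_
  have hAn : MeasurableSet (A ∩ interior (K n)) := hA.inter isOpen_interior.measurableSet
  rw [prod_prod, fst_restrict_univ_prod_apply μ _ hAn]
  exact measure_prod_eq_mul_volume μ hinv hAn (K.isCompact n)
    (inter_subset_right.trans interior_subset) hB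

/-- Let `Y` be a locally compact, second countable, Hausdorff space,
and let `μ` be a Borel measure on `Y × ℝ`, finite on compact sets, invariant under all
translations in the second coordinate. Then there exists a Borel measure `ν₀` on `Y`,
finite on compact sets, such that `μ = ν₀ × m` where `m` is Lebesgue measure on `ℝ`. -/
theorem stmt_8 {Y : Type*} [TopologicalSpace Y] [LocallyCompactSpace Y]
    [SecondCountableTopology Y] [T2Space Y] [MeasurableSpace Y] [BorelSpace Y]
    (μ : Measure (Y × ℝ)) [IsFiniteMeasureOnCompacts μ]
    (hinv : ∀ s : ℝ, Measure.map (fun p : Y × ℝ => (p.1, p.2 + s)) μ = μ) :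
    ∃ ν₀ : Measure Y, IsFiniteMeasureOnCompacts ν₀ ∧ μ = ν₀.prod volume :=
  stmt_8_general μ hinv
end

section
/- Let P be a closed convex cone in ℝ^d that is spanning (P − P = ℝ^d) and pointed (P ∩ (−P) = {0}), let v be a vector in the interior of P, and let A ⊆ ℝ^d be a closed set with ∅ ≠ A ≠ ℝ^d and −P + A ⊆ A. Then there exists a unique function f : ℝ^d → ℝ such that for every x ∈ ℝ^d, {t ∈ ℝ : x + t·v ∈ A} = (−∞, f(x)]. Moreover, f is continuous, f(x + s·v) = f(x) − s for all x ∈ ℝ^d and s ∈ ℝ, f(x + p) ≤ f(x) for all x ∈ ℝ^d and p ∈ P, and A = {x ∈ ℝ^d : f(x) ≥ 0}. -/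
open Pointwise

set_option maxHeartbeats 1000000

/-- Let `P` be a closed convex cone in `ℝ^d`, spanning and pointed,
let `v ∈ Int(P)`, and let `A ⊆ ℝ^d` be closed with `∅ ≠ A ≠ ℝ^d` and `-P + A ⊆ A`.
Then there is a unique `f : ℝ^d → ℝ` with `{t : x + t•v ∈ A} = (-∞, f x]` for all `x`;
moreover `f` is continuous, `f (x + s•v) = f x - s`, `f (x + p) ≤ f x` for `p ∈ P`,
and `A = {x : f x ≥ 0}`. -/
theorem stmt_9 {d : ℕ}
    (P : Set (EuclideanSpace ℝ (Fin d)))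
    (hPclosed : IsClosed P) (hPconvex : Convex ℝ P)
    (hPcone : ∀ (c : ℝ), 0 ≤ c → ∀ x ∈ P, c • x ∈ P)
    (hPspan : P - P = Set.univ)
    (hPpointed : P ∩ (-P) = {0})
    (v : EuclideanSpace ℝ (Fin d)) (hv : v ∈ interior P)
    (A : Set (EuclideanSpace ℝ (Fin d)))
    (hAclosed : IsClosed A) (hAne : A.Nonempty) (hAnuniv : A ≠ Set.univ)
    (hAinv : -P + A ⊆ A) :
    ∃ f : EuclideanSpace ℝ (Fin d) → ℝ,
      (∀ x, {t : ℝ | x + t • v ∈ A} = Set.Iic (f x)) ∧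
      Continuous f ∧
      (∀ x (s : ℝ), f (x + s • v) = f x - s) ∧
      (∀ x, ∀ p ∈ P, f (x + p) ≤ f x) ∧
      A = {x | 0 ≤ f x} ∧
      (∀ g : EuclideanSpace ℝ (Fin d) → ℝ,
        (∀ x, {t : ℝ | x + t • v ∈ A} = Set.Iic (g x)) → g = f) := by
  have hvP : v ∈ P := interior_subset hv
  obtain ⟨r, hr, hball⟩ := Metric.isOpen_iff.mp isOpen_interior v hv
  -- P is closed under addition
  have hPadd : ∀ p ∈ P, ∀ q ∈ P, p + q ∈ P := by
    intro p hp q hq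
    have h := hPconvex hp hq (by norm_num : (0:ℝ) ≤ 1/2) (by norm_num : (0:ℝ) ≤ 1/2)
      (by norm_num : (1:ℝ)/2 + 1/2 = 1)
    have h2 := hPcone 2 (by norm_num) _ h
    have he : (2:ℝ) • ((1/2 : ℝ) • p + (1/2 : ℝ) • q) = p + q := by module
    rwa [he] at h2
  -- perturbation lemma
  have hpert : ∀ ε : ℝ, 0 < ε → ∀ u : EuclideanSpace ℝ (Fin d), ‖u‖ < ε * r →
      ε • v + u ∈ P := by
    intro ε hε u hu
    have h1 : v + ε⁻¹ • u ∈ P := by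
      apply interior_subset (hball ?_)
      rw [Metric.mem_ball, dist_eq_norm, add_sub_cancel_left, norm_smul, Real.norm_eq_abs,
        abs_inv, abs_of_pos hε]
      calc ε⁻¹ * ‖u‖ < ε⁻¹ * (ε * r) := by
            exact mul_lt_mul_of_pos_left hu (by positivity)
        _ = r := by field_simp
    have h2 := hPcone ε hε.le _ h1
    rwa [smul_add, smul_inv_smul₀ hε.ne'] at h2
  -- v is absorbing
  have habs : ∀ z : EuclideanSpace ℝ (Fin d), ∃ t : ℝ, 0 < t ∧ t • v + z ∈ P := by
    intro z
    refine ⟨(‖z‖ + 1)/r, by positivity, hpert _ (by positivity) z ?_⟩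
    rw [div_mul_cancel₀ _ hr.ne']
    linarith [norm_nonneg z]
  set S : EuclideanSpace ℝ (Fin d) → Set ℝ := fun x => {t : ℝ | x + t • v ∈ A} with hS
  -- S x is a lower set
  have hlow : ∀ x, ∀ t ∈ S x, ∀ s ≤ t, s ∈ S x := by
    intro x t ht s hs
    have hp : (t - s) • v ∈ P := hPcone _ (by linarith) v hvP
    have h : -((t - s) • v) + (x + t • v) ∈ A :=
      hAinv (Set.add_mem_add (Set.neg_mem_neg.mpr hp) ht)
    have he : -((t - s) • v) + (x + t • v) = x + s • v := by module
    rwa [he] at h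
  -- S x is nonempty
  have hne : ∀ x, (S x).Nonempty := by
    intro x
    obtain ⟨a, ha⟩ := hAne
    obtain ⟨t, ht, htP⟩ := habs (a - x)
    refine ⟨-t, ?_⟩
    have h : -(t • v + (a - x)) + a ∈ A :=
      hAinv (Set.add_mem_add (Set.neg_mem_neg.mpr htP) ha)
    have he : -(t • v + (a - x)) + a = x + (-t) • v := by module
    rwa [he] at h
  -- S x is bounded above
  have hbdd : ∀ x, BddAbove (S x) := by
    intro x
    obtain ⟨y, hy⟩ := (Set.ne_univ_iff_exists_notMem A).mp hAnuniv
    obtain ⟨t, ht, htP⟩ := habs (x - y)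
    refine ⟨t, fun s hs => ?_⟩
    by_contra hst
    push_neg at hst
    have hp : (t • v + (x - y)) + (s - t) • v ∈ P :=
      hPadd _ htP _ (hPcone _ (by linarith) v hvP)
    have h : -((t • v + (x - y)) + (s - t) • v) + (x + s • v) ∈ A :=
      hAinv (Set.add_mem_add (Set.neg_mem_neg.mpr hp) hs)
    have he : -((t • v + (x - y)) + (s - t) • v) + (x + s • v) = y := by module
    rw [he] at h
    exact hy h
  -- S x is closed
  have hScl : ∀ x, IsClosed (S x) := by
    intro x
    have hc : Continuous fun t : ℝ => x + t • v := by continuity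
    exact hAclosed.preimage hc
  set f : EuclideanSpace ℝ (Fin d) → ℝ := fun x => sSup (S x) with hf
  have hIic : ∀ x, S x = Set.Iic (f x) := by
    intro x
    apply Set.eq_of_subset_of_subset
    · exact fun t ht => le_csSup (hbdd x) ht
    · intro t ht
      have hmem : f x ∈ S x := (hScl x).csSup_mem (hne x) (hbdd x)
      exact hlow x _ hmem t ht
  -- translation property
  have hshift : ∀ x (s : ℝ), f (x + s • v) = f x - s := by
    intro x s
    have h1 : S (x + s • v) = Set.Iic (f x - s) := by
      ext t
      show x + s • v + t • v ∈ A ↔ t ≤ f x - s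
      have he : x + s • v + t • v = x + (t + s) • v := by module
      rw [he]
      constructor
      · intro h
        have h2 : t + s ∈ S x := h
        rw [hIic x] at h2
        have := Set.mem_Iic.mp h2
        linarith
      · intro h
        have h2 : t + s ∈ S x := by
          rw [hIic x]
          exact Set.mem_Iic.mpr (by linarith)
        exact h2
    have h2 := (hIic (x + s • v)).symm.trans h1
    exact Set.Iic_injective h2
  -- monotonicity
  have hmono : ∀ x, ∀ p ∈ P, f (x + p) ≤ f x := by
    intro x p hp
    have h1 : f (x + p) ∈ S (x + p) := by
      rw [hIic]; exact Set.mem_Iic.mpr le_rfl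
    have h2 : f (x + p) ∈ S x := by
      have h : -p + (x + p + f (x + p) • v) ∈ A :=
        hAinv (Set.add_mem_add (Set.neg_mem_neg.mpr hp) h1)
      have he : -p + (x + p + f (x + p) • v) = x + f (x + p) • v := by module
      rwa [he] at h
    rw [hIic x] at h2
    exact Set.mem_Iic.mp h2
  -- A = {x | 0 ≤ f x}
  have hAeq : A = {x | 0 ≤ f x} := by
    ext x
    have h0 : x ∈ A ↔ (0:ℝ) ∈ S x := by
      show x ∈ A ↔ x + (0:ℝ) • v ∈ A
      rw [zero_smul, add_zero]
    rw [Set.mem_setOf_eq, h0, hIic x]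
    exact Set.mem_Iic
  -- continuity
  have hcont : Continuous f := by
    rw [Metric.continuous_iff]
    intro x ε hε
    refine ⟨ε/2 * r, by positivity, fun y hy => ?_⟩
    set u := y - x with hu
    have hun : ‖u‖ < ε/2 * r := by rwa [hu, ← dist_eq_norm]
    have h1 : (ε/2) • v + u ∈ P := hpert _ (by positivity) u hun
    have h2 : (ε/2) • v + (-u) ∈ P := hpert _ (by positivity) (-u) (by rwa [norm_neg])
    have hy1 : (x + (-(ε/2)) • v) + ((ε/2) • v + u) = y := by
      rw [hu, neg_smul]; abel
    have hle1 : f y ≤ f x + ε/2 := by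
      have h := hmono (x + (-(ε/2)) • v) _ h1
      rw [hy1, hshift] at h
      linarith
    have hx1 : (y + (-(ε/2)) • v) + ((ε/2) • v + (-u)) = x := by
      rw [hu, neg_smul]; abel
    have hle2 : f x ≤ f y + ε/2 := by
      have h := hmono (y + (-(ε/2)) • v) _ h2
      rw [hx1, hshift] at h
      linarith
    rw [Real.dist_eq, abs_sub_lt_iff]
    constructor <;> linarith
  refine ⟨f, fun x => hIic x, hcont, hshift, hmono, hAeq, ?_⟩
  intro g hg
  funext x
  have h : Set.Iic (g x) = Set.Iic (f x) := (hg x).symm.trans (hIic x)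
  exact Set.Iic_injective h
end

section
/- Let P be a closed convex cone in ℝ^d that is spanning (P − P = ℝ^d) and pointed (P ∩ (−P) = {0}), and let v_1, …, v_d be a basis of ℝ^d consisting of vectors in the interior of P. Let 𝒳 be a nonempty collection of closed subsets A ⊆ ℝ^d with ∅ ≠ A ≠ ℝ^d and −P + A ⊆ A, such that A + a ∈ 𝒳 for every A ∈ 𝒳 and every a ∈ P. For A ∈ 𝒳 and i ∈ {1, …, d}, let f_i^A : ℝ^d → ℝ be the function determined by {t ∈ ℝ : x + t·v_i ∈ A} = (−∞, f_i^A(x)] for all x ∈ ℝ^d. Assume that for all A, B ∈ 𝒳 and all i, j ∈ {1, …, d}: if f_i^A(0) ≤ f_i^B(0) then f_j^A(0) ≤ f_j^B(0). Then for all A, B ∈ 𝒳, either A ⊆ B or B ⊆ A. -/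
open Pointwise

/-!
Fix `A, B` and, for `z ∈ -P`, compare `f_i^A z` with `f_i^B z`. Applying the hypothesis to the
translates of `A` and `B` by `-z` shows that whether `f_i^A z ≤ f_i^B z` holds does not depend on
`i`. Moving along `v_k` shifts `f_k^A` and `f_k^B` by the same amount, so on `-P` this comparison
is unchanged by subtracting nonnegative combinations of the `v_k`. A point `x ∈ A \ B` has
`f_i^B x < f_i^A x`, a point `y ∈ B \ A` has the reverse; both can be moved along `v_i` into `-P`,
and, since `v` is a basis, then further down to a common point, where the two comparisons clash.
-/

section HeightFunction

variable {E : Type*} [AddCommGroup E] [Module ℝ E]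

def IsHeightFunction (A : Set E) (u : E) (g : E → ℝ) : Prop :=
  ∀ x, {t : ℝ | x + t • u ∈ A} = Set.Iic (g x)

namespace IsHeightFunction

variable {A : Set E} {u : E} {g : E → ℝ}

theorem mem_iff (hg : IsHeightFunction A u g) (x : E) : x ∈ A ↔ 0 ≤ g x := by
  simpa using Set.ext_iff.mp (hg x) 0

theorem apply_sub_smul (hg : IsHeightFunction A u g) (x : E) (τ : ℝ) :
    g (x - τ • u) = g x + τ := by
  rw [← Set.Iic_inj, ← hg]
  ext t
  have key : x - τ • u + t • u = x + (t - τ) • u := by rw [sub_smul]; abel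
  rw [Set.mem_ofPred_eq, key, Set.mem_Iic, ← sub_le_iff_le_add, ← Set.mem_Iic, ← hg x,
    Set.mem_ofPred_eq]

theorem image_add_right (hg : IsHeightFunction A u g) {p : E} {g' : E → ℝ}
    (hg' : IsHeightFunction ((· + p) '' A) u g') (x : E) : g' x = g (x - p) := by
  rw [← Set.Iic_inj, ← hg', ← hg]
  ext t
  simp [Set.image_add_right, sub_eq_add_neg, add_right_comm]

theorem apply_lt_apply_of_mem_of_notMem {B : Set E} {g' : E → ℝ} (hg : IsHeightFunction A u g)
    (hg' : IsHeightFunction B u g') {x : E} (hxA : x ∈ A) (hxB : x ∉ B) : g' x < g x :=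
  (not_le.mp (mt (hg'.mem_iff x).mpr hxB)).trans_le ((hg.mem_iff x).mp hxA)

end IsHeightFunction

variable {ι : Type*}

theorem sub_sum_smul_mem_and_iff (v : ι → E) {Q : Set E} (S : E → Prop)
    (hQ : ∀ z ∈ Q, ∀ k, ∀ σ : ℝ, 0 ≤ σ → z - σ • v k ∈ Q)
    (hS : ∀ z ∈ Q, ∀ k, ∀ σ : ℝ, 0 ≤ σ → (S (z - σ • v k) ↔ S z))
    {c : ι → ℝ} (hc : 0 ≤ c) (s : Finset ι) {z : E} (hz : z ∈ Q) :
    z - ∑ k ∈ s, c k • v k ∈ Q ∧ (S (z - ∑ k ∈ s, c k • v k) ↔ S z) := by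
  classical
  induction s using Finset.induction_on with
  | empty => simpa using hz
  | insert a s ha ih =>
    rw [Finset.sum_insert ha, add_comm, ← sub_sub]
    exact ⟨hQ _ ih.1 a _ (hc a), (hS _ ih.1 a _ (hc a)).trans ih.2⟩

theorem Module.Basis.exists_sub_sum_smul_eq_sub_sum_smul [Fintype ι] (v : Module.Basis ι ℝ E)
    (a b : E) : ∃ c c' : ι → ℝ, 0 ≤ c ∧ 0 ≤ c' ∧
      a - ∑ k, c k • v k = b - ∑ k, c' k • v k := by
  refine ⟨fun k => (v.repr (a - b) k)⁺, fun k => (v.repr (a - b) k)⁻,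
    fun k => posPart_nonneg _, fun k => negPart_nonneg _, ?_⟩
  rw [sub_eq_sub_iff_sub_eq_sub, ← Finset.sum_sub_distrib]
  simp_rw [← sub_smul, posPart_sub_negPart, v.sum_repr]

theorem subset_or_subset_of_isHeightFunction [Fintype ι] (v : Module.Basis ι ℝ E)
    {A B : Set E} {gA gB : ι → E → ℝ} (hA : ∀ k, IsHeightFunction A (v k) (gA k))
    (hB : ∀ k, IsHeightFunction B (v k) (gB k)) {Q : Set E}
    (hQ : ∀ z ∈ Q, ∀ k, ∀ σ : ℝ, 0 ≤ σ → z - σ • v k ∈ Q) (i : ι)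
    (hreach : ∀ x, ∃ s : ℝ, x - s • v i ∈ Q)
    (hord : ∀ z ∈ Q, ∀ k l, gA k z ≤ gB k z → gA l z ≤ gB l z) :
    A ⊆ B ∨ B ⊆ A := by
  by_contra! hAB
  obtain ⟨x, hxA, hxB⟩ := Set.not_subset.mp hAB.1
  obtain ⟨y, hyB, hyA⟩ := Set.not_subset.mp hAB.2
  have hS : ∀ z ∈ Q, ∀ k, ∀ σ : ℝ, 0 ≤ σ →
      (gA i (z - σ • v k) ≤ gB i (z - σ • v k) ↔ gA i z ≤ gB i z) := by
    intro z hz k σ hσ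
    have hz' := hQ z hz k σ hσ
    calc gA i (z - σ • v k) ≤ gB i (z - σ • v k)
        ↔ gA k (z - σ • v k) ≤ gB k (z - σ • v k) := ⟨hord _ hz' i k, hord _ hz' k i⟩
      _ ↔ gA k z ≤ gB k z := by
        rw [(hA k).apply_sub_smul, (hB k).apply_sub_smul, add_le_add_iff_right]
      _ ↔ gA i z ≤ gB i z := ⟨hord _ hz k i, hord _ hz i k⟩
  obtain ⟨s, hs⟩ := hreach x
  obtain ⟨r, hr⟩ := hreach y
  have hx : ¬gA i (x - s • v i) ≤ gB i (x - s • v i) := by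
    rw [(hA i).apply_sub_smul, (hB i).apply_sub_smul, add_le_add_iff_right, not_le]
    exact (hA i).apply_lt_apply_of_mem_of_notMem (hB i) hxA hxB
  have hy : gA i (y - r • v i) ≤ gB i (y - r • v i) := by
    rw [(hA i).apply_sub_smul, (hB i).apply_sub_smul, add_le_add_iff_right]
    exact ((hB i).apply_lt_apply_of_mem_of_notMem (hA i) hyB hyA).le
  obtain ⟨c, c', hc, hc', hcommon⟩ :=
    v.exists_sub_sum_smul_eq_sub_sum_smul (x - s • v i) (y - r • v i)
  have hx' := (sub_sum_smul_mem_and_iff v (fun z => gA i z ≤ gB i z) hQ hS hc .univ hs).2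
  have hy' := (sub_sum_smul_mem_and_iff v (fun z => gA i z ≤ gB i z) hQ hS hc' .univ hr).2
  rw [hcommon] at hx'
  exact hx (hx'.mp (hy'.mpr hy))

end HeightFunction

theorem Set.subset_or_subset_of_subsingleton {α : Type*} [Subsingleton α] (A B : Set α) :
    A ⊆ B ∨ B ⊆ A := by
  rcases A.eq_empty_or_nonempty with rfl | ⟨x, hx⟩
  · exact Or.inl (Set.empty_subset B)
  · exact Or.inr fun y _ => Subsingleton.elim x y ▸ hx

section Cone

variable {E : Type*} [AddCommGroup E] [Module ℝ E] {P : Set E}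

theorem add_mem_of_convex_of_smul_mem (hPconvex : Convex ℝ P)
    (hPcone : ∀ c : ℝ, 0 ≤ c → ∀ x ∈ P, c • x ∈ P) {p q : E} (hp : p ∈ P) (hq : q ∈ P) :
    p + q ∈ P := by
  have hmid :=
    hPcone 2 zero_le_two _ (hPconvex hp hq one_half_pos.le one_half_pos.le (add_halves 1))
  rwa [smul_add, smul_smul, smul_smul, mul_one_div_cancel two_ne_zero, one_smul, one_smul]
    at hmid

theorem exists_smul_sub_mem_of_mem_interior [TopologicalSpace E] [IsTopologicalAddGroup E]
    [ContinuousSMul ℝ E] (hPcone : ∀ c : ℝ, 0 ≤ c → ∀ x ∈ P, c • x ∈ P) {u : E}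
    (hu : u ∈ interior P) (x : E) : ∃ s : ℝ, s • u - x ∈ P := by
  have hlim : Filter.Tendsto (fun s : ℝ => u - s • x) (nhdsWithin 0 (Set.Ioi 0)) (nhds u) := by
    have hcont : Continuous fun s : ℝ => u - s • x := by fun_prop
    simpa using (hcont.tendsto 0).mono_left nhdsWithin_le_nhds
  obtain ⟨s, hs, hs0⟩ :=
    ((hlim.eventually (mem_interior_iff_mem_nhds.mp hu)).and self_mem_nhdsWithin).exists
  refine ⟨s⁻¹, ?_⟩
  have hscaled := hPcone s⁻¹ (inv_nonneg.mpr (le_of_lt hs0)) _ hs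
  rwa [smul_sub, smul_smul, inv_mul_cancel₀ (ne_of_gt hs0), one_smul] at hscaled

end Cone

theorem stmt_10_general {d : ℕ}
    (P : Set (EuclideanSpace ℝ (Fin d)))
    (hPconvex : Convex ℝ P)
    (hPcone : ∀ (c : ℝ), 0 ≤ c → ∀ x ∈ P, c • x ∈ P)
    (v : Module.Basis (Fin d) ℝ (EuclideanSpace ℝ (Fin d)))
    (hv : ∀ i, v i ∈ interior P)
    (𝒳 : Set (Set (EuclideanSpace ℝ (Fin d))))
    (h𝒳trans : ∀ A ∈ 𝒳, ∀ a ∈ P, (· + a) '' A ∈ 𝒳)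
    (f : Set (EuclideanSpace ℝ (Fin d)) → Fin d → EuclideanSpace ℝ (Fin d) → ℝ)
    (hf : ∀ A ∈ 𝒳, ∀ (i : Fin d) (x : EuclideanSpace ℝ (Fin d)),
      {t : ℝ | x + t • v i ∈ A} = Set.Iic (f A i x))
    (hcomp : ∀ A ∈ 𝒳, ∀ B ∈ 𝒳, ∀ i j : Fin d,
      f A i 0 ≤ f B i 0 → f A j 0 ≤ f B j 0) :
    ∀ A ∈ 𝒳, ∀ B ∈ 𝒳, A ⊆ B ∨ B ⊆ A := by
  intro A hA B hB
  rcases subsingleton_or_nontrivial (EuclideanSpace ℝ (Fin d)) with _ | _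
  · exact Set.subset_or_subset_of_subsingleton A B
  obtain ⟨i⟩ := v.index_nonempty
  have hf_translate : ∀ X ∈ 𝒳, ∀ z ∈ -P, ∀ k, f ((· + -z) '' X) k 0 = f X k z := by
    intro X hX z hz k
    rw [IsHeightFunction.image_add_right (hf X hX k) (hf _ (h𝒳trans X hX _ hz) k), zero_sub,
      neg_neg]
  refine subset_or_subset_of_isHeightFunction (Q := -P) v (hf A hA) (hf B hB) ?_ i ?_ ?_
  · intro z hz k σ hσ
    rw [Set.mem_neg, neg_sub, sub_eq_add_neg]
    exact add_mem_of_convex_of_smul_mem hPconvex hPcone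
      (hPcone σ hσ _ (interior_subset (hv k))) hz
  · intro x
    obtain ⟨s, hs⟩ := exists_smul_sub_mem_of_mem_interior hPcone (hv i) x
    exact ⟨s, by rwa [Set.mem_neg, neg_sub]⟩
  · intro z hz k l
    simpa only [hf_translate A hA z hz, hf_translate B hB z hz] using
      hcomp _ (h𝒳trans A hA _ hz) _ (h𝒳trans B hB _ hz) k l

/-- Let `P` be a closed convex cone in `ℝ^d`, spanning and pointed,
and `v₁, …, v_d` a basis of `ℝ^d` of vectors in `Int(P)`. Let `𝒳` be a nonempty
collection of closed sets `A` with `∅ ≠ A ≠ ℝ^d` and `-P + A ⊆ A`, closed under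
translation by elements of `P`. With `f_i^A` determined by
`{t : x + t•v_i ∈ A} = (-∞, f_i^A x]`, assume that for all `A, B ∈ 𝒳` and all `i, j`:
`f_i^A 0 ≤ f_i^B 0 → f_j^A 0 ≤ f_j^B 0`. Then any two members of `𝒳` are comparable
under inclusion. -/
theorem stmt_10 {d : ℕ}
    (P : Set (EuclideanSpace ℝ (Fin d)))
    (hPclosed : IsClosed P) (hPconvex : Convex ℝ P)
    (hPcone : ∀ (c : ℝ), 0 ≤ c → ∀ x ∈ P, c • x ∈ P)
    (hPspan : P - P = Set.univ)
    (hPpointed : P ∩ (-P) = {0})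
    (v : Module.Basis (Fin d) ℝ (EuclideanSpace ℝ (Fin d)))
    (hv : ∀ i, v i ∈ interior P)
    (𝒳 : Set (Set (EuclideanSpace ℝ (Fin d)))) (h𝒳ne : 𝒳.Nonempty)
    (h𝒳 : ∀ A ∈ 𝒳, IsClosed A ∧ A.Nonempty ∧ A ≠ Set.univ ∧ -P + A ⊆ A)
    (h𝒳trans : ∀ A ∈ 𝒳, ∀ a ∈ P, (· + a) '' A ∈ 𝒳)
    (f : Set (EuclideanSpace ℝ (Fin d)) → Fin d → EuclideanSpace ℝ (Fin d) → ℝ)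
    (hf : ∀ A ∈ 𝒳, ∀ (i : Fin d) (x : EuclideanSpace ℝ (Fin d)),
      {t : ℝ | x + t • v i ∈ A} = Set.Iic (f A i x))
    (hcomp : ∀ A ∈ 𝒳, ∀ B ∈ 𝒳, ∀ i j : Fin d,
      f A i 0 ≤ f B i 0 → f A j 0 ≤ f B j 0) :
    ∀ A ∈ 𝒳, ∀ B ∈ 𝒳, A ⊆ B ∨ B ⊆ A :=
  stmt_10_general P hPconvex hPcone v hv 𝒳 h𝒳trans f hf hcomp
end

section
/- Let P be a closed convex cone in ℝ^d that is spanning (P − P = ℝ^d) and pointed (P ∩ (−P) = {0}). Let λ₁, λ₂ ∈ ℝ^d with ‖λ₁‖ = ‖λ₂‖ = 1, ⟨λ_i|x⟩ ≥ 0 for all x ∈ P (i = 1, 2), and λ₁ ≠ λ₂. Let K₁, K₂ be nonzero separable complex Hilbert spaces, H_i = L²([0,∞), K_i), and V^{(i)}_a = S_{⟨λ_i|a⟩} for a ∈ P. If T : H₁ → H₂ is a bounded operator with T V^{(1)}_a = V^{(2)}_a T and T (V^{(1)}_a)* = (V^{(2)}_a)* T for all a ∈ P, then T = 0. That is, the isometric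 representations S^{(λ₁,k₁)} and S^{(λ₂,k₂)} are disjoint. -/
/-!
Since `l₁` and `l₂` are distinct unit vectors that are both nonnegative on the spanning cone `P`,
they are not proportional, so some `x = p - q` with `p, q ∈ P` has `⟨l₁|x⟩ = 0` and
`⟨l₂|x⟩ = 1`. Intertwining at `p` and at `q` then gives `S_{1+u} T = S_u T` with
`u = ⟨l₂|q⟩ ≥ 0`, and the shift on `L²([0,∞), K₂)` has no such coincidences: a function on the
half-line that is invariant under translation by `1` must vanish.
-/

open MeasureTheory Pointwise Set

section Shift

variable {E : Type*} [Zero E]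

/-- Every point is moved into `(-∞, 0)` by finitely many translations by `-t`. -/
lemma ae_eq_zero_of_ae_periodic_of_eq_zero_of_neg {h : ℝ → E} {t : ℝ} (ht : 0 < t)
    (hper : ∀ᵐ y, h (y - t) = h y) (hneg : ∀ y < 0, h y = 0) : h =ᵐ[volume] 0 := by
  have hiter : ∀ n : ℕ, ∀ᵐ y, h (y - n * t) = h y := by
    intro n
    induction n with
    | zero => simp
    | succ n ih =>
      filter_upwards [(measurePreserving_sub_right volume t).quasiMeasurePreserving.ae ih, hper]
        with y hshifted hy
      rw [← hy, ← hshifted]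
      congr 1
      push_cast
      ring
  filter_upwards [ae_all_iff.2 hiter] with y hy
  obtain ⟨n, hn⟩ := exists_nat_gt (y / t)
  rw [← hy n]
  exact hneg _ (by rw [div_lt_iff₀ ht] at hn; linarith)

noncomputable def halfLineShift (t : ℝ) (g : ℝ → E) : ℝ → E :=
  fun x => if 0 ≤ x - t then g (x - t) else 0

lemma halfLineShift_eq_indicator_comp (t : ℝ) (g : ℝ → E) :
    halfLineShift t g = fun x => (Ici 0).indicator g (x - t) := by
  ext x
  simp [halfLineShift, indicator_apply]

lemma ae_eq_zero_of_halfLineShift_add_ae_eq {g : ℝ → E} {t u : ℝ} (ht : 0 < t)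
    (hu : 0 ≤ u)
    (h : halfLineShift (t + u) g =ᵐ[volume.restrict (Ici 0)] halfLineShift u g) :
    g =ᵐ[volume.restrict (Ici 0)] 0 := by
  set g₀ := (Ici (0 : ℝ)).indicator g
  have hneg : ∀ y < 0, g₀ y = 0 := fun y hy => indicator_of_notMem (by simpa using hy) g
  have hall : ∀ᵐ x, g₀ (x - (t + u)) = g₀ (x - u) := by
    rw [halfLineShift_eq_indicator_comp, halfLineShift_eq_indicator_comp, Filter.EventuallyEq,
      ae_restrict_iff' measurableSet_Ici] at h
    filter_upwards [h] with x hx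
    by_cases hx0 : 0 ≤ x
    · exact hx hx0
    · rw [hneg _ (by linarith), hneg _ (by linarith)]
  have hper : ∀ᵐ y, g₀ (y - t) = g₀ y := by
    filter_upwards [(measurePreserving_add_right volume u).quasiMeasurePreserving.ae hall]
      with y hy
    simpa [show y + u - (t + u) = y - t by ring] using hy
  rw [Filter.EventuallyEq, ae_restrict_iff' measurableSet_Ici]
  filter_upwards [ae_eq_zero_of_ae_periodic_of_eq_zero_of_neg ht hper hneg] with x hx hx0
  simpa [g₀, indicator_of_mem hx0] using hx

end Shift

section DualCone

variable {F : Type*} [NormedAddCommGroup F] [InnerProductSpace ℝ F]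

lemma eq_zero_of_forall_mem_inner_eq_zero {P : Set F} (hPspan : P - P = univ) {l : F}
    (h : ∀ x ∈ P, inner ℝ l x = 0) : l = 0 := by
  obtain ⟨p, hp, q, hq, hpq⟩ := Set.mem_sub.mp (hPspan ▸ mem_univ l)
  rw [← inner_self_eq_zero (𝕜 := ℝ)]
  nth_rw 2 [← hpq]
  rw [inner_sub_right, h p hp, h q hq, sub_zero]

lemma notMem_span_singleton_of_dual {P : Set F} (hPspan : P - P = univ) {l₁ l₂ : F}
    (hl₁ : ‖l₁‖ = 1) (hl₂ : ‖l₂‖ = 1) (hl₁dual : ∀ x ∈ P, 0 ≤ inner ℝ l₁ x)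
    (hl₂dual : ∀ x ∈ P, 0 ≤ inner ℝ l₂ x) (hne : l₁ ≠ l₂) : l₂ ∉ Submodule.span ℝ {l₁} := by
  intro h
  obtain ⟨a, rfl⟩ := Submodule.mem_span_singleton.mp h
  rw [norm_smul, hl₁, mul_one, Real.norm_eq_abs] at hl₂
  rcases abs_eq (zero_le_one' ℝ) |>.mp hl₂ with rfl | rfl
  · exact hne (one_smul ℝ l₁).symm
  · have hzero : ∀ x ∈ P, inner ℝ l₁ x = 0 := fun x hx => by
      have := hl₂dual x hx
      rw [neg_one_smul, inner_neg_left] at this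
      linarith [hl₁dual x hx]
    simp [eq_zero_of_forall_mem_inner_eq_zero hPspan hzero] at hl₁

/-- Orthogonalize `l₂` against `l₁` and rescale. -/
lemma exists_inner_eq_zero_inner_eq_one {l₁ l₂ : F} (h : l₂ ∉ Submodule.span ℝ {l₁}) :
    ∃ x : F, inner ℝ l₁ x = 0 ∧ inner ℝ l₂ x = 1 := by
  set w := l₂ - (inner ℝ l₁ l₂ / inner ℝ l₁ l₁) • l₁
  have hw : w ≠ 0 := fun hw =>
    h (sub_eq_zero.mp hw ▸ Submodule.smul_mem _ _ (Submodule.mem_span_singleton_self l₁))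
  have hl₁w : inner ℝ l₁ w = 0 := by
    rcases eq_or_ne l₁ 0 with rfl | hl₁
    · simp
    · have : inner ℝ l₁ l₁ ≠ (0 : ℝ) := inner_self_ne_zero.mpr hl₁
      simp only [w, inner_sub_right, real_inner_smul_right]
      field_simp
      ring
  have hl₂w : inner ℝ l₂ w = ‖w‖ ^ 2 := by
    rw [← real_inner_self_eq_norm_sq]
    nth_rw 1 [show l₂ = w + (inner ℝ l₁ l₂ / inner ℝ l₁ l₁) • l₁ by simp [w]]
    rw [inner_add_left, real_inner_smul_left, real_inner_comm, hl₁w, mul_zero, add_zero]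
  refine ⟨(‖w‖ ^ 2)⁻¹ • w, ?_, ?_⟩
  · rw [real_inner_smul_right, hl₁w, mul_zero]
  · rw [real_inner_smul_right, hl₂w, inv_mul_cancel₀ (by positivity)]

end DualCone

theorem stmt_14_general {d : ℕ}
    (P : Set (EuclideanSpace ℝ (Fin d)))
    (hPspan : P - P = Set.univ)
    (l₁ l₂ : EuclideanSpace ℝ (Fin d)) (hl₁ : ‖l₁‖ = 1) (hl₂ : ‖l₂‖ = 1)
    (hl₁dual : ∀ x ∈ P, 0 ≤ (inner ℝ l₁ x : ℝ))
    (hl₂dual : ∀ x ∈ P, 0 ≤ (inner ℝ l₂ x : ℝ))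
    (hne : l₁ ≠ l₂)
    {K₁ K₂ : Type*}
    [NormedAddCommGroup K₁] [InnerProductSpace ℂ K₁]
    [NormedAddCommGroup K₂] [InnerProductSpace ℂ K₂]
    (S₁ : ℝ → (Lp K₁ 2 (volume.restrict (Set.Ici (0:ℝ))) →L[ℂ]
               Lp K₁ 2 (volume.restrict (Set.Ici (0:ℝ)))))
    (S₂ : ℝ → (Lp K₂ 2 (volume.restrict (Set.Ici (0:ℝ))) →L[ℂ]
               Lp K₂ 2 (volume.restrict (Set.Ici (0:ℝ)))))
    (hS₂ : ∀ t : ℝ, 0 ≤ t → ∀ f : Lp K₂ 2 (volume.restrict (Set.Ici (0:ℝ))),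
      (S₂ t f : ℝ → K₂) =ᵐ[volume.restrict (Set.Ici (0:ℝ))]
        fun x => if 0 ≤ x - t then f (x - t) else 0)
    (T : Lp K₁ 2 (volume.restrict (Set.Ici (0:ℝ))) →L[ℂ]
         Lp K₂ 2 (volume.restrict (Set.Ici (0:ℝ))))
    (hT : ∀ a ∈ P, T.comp (S₁ (inner ℝ l₁ a : ℝ)) = (S₂ (inner ℝ l₂ a : ℝ)).comp T) :
    T = 0 := by
  obtain ⟨x, hx₁, hx₂⟩ := exists_inner_eq_zero_inner_eq_one
    (notMem_span_singleton_of_dual hPspan hl₁ hl₂ hl₁dual hl₂dual hne)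
  obtain ⟨p, hp, q, hq, rfl⟩ := Set.mem_sub.mp (hPspan ▸ mem_univ x)
  rw [inner_sub_right, sub_eq_zero] at hx₁
  rw [inner_sub_right, sub_eq_iff_eq_add] at hx₂
  have hu : 0 ≤ inner ℝ l₂ q := hl₂dual q hq
  have hST : (S₂ (1 + inner ℝ l₂ q)).comp T = (S₂ (inner ℝ l₂ q)).comp T := by
    rw [← hx₂, ← hT p hp, ← hT q hq, hx₁]
  ext1 f
  have hfix : S₂ (1 + inner ℝ l₂ q) (T f) = S₂ (inner ℝ l₂ q) (T f) :=
    congrArg (fun A => A f) hST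
  refine Lp.eq_zero_iff_ae_eq_zero.mpr (ae_eq_zero_of_halfLineShift_add_ae_eq one_pos hu ?_)
  exact (hS₂ _ (by linarith) (T f)).symm.trans (hfix ▸ hS₂ _ hu (T f))

/-- **Statement 14.** Let `P` be a closed convex cone in `ℝ^d`, spanning and pointed,
and `l₁ ≠ l₂` two unit vectors in the dual cone. Let `K₁, K₂` be nonzero separable
complex Hilbert spaces, `H_i = L²([0,∞), K_i)` and `V^{(i)}_a = S_{⟨l_i|a⟩}`. If
`T : H₁ → H₂` is bounded with `T V¹_a = V²_a T` and `T (V¹_a)* = (V²_a)* T` for all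
`a ∈ P`, then `T = 0`: the representations `S^{(l₁,k₁)}` and `S^{(l₂,k₂)}` are
disjoint. -/
theorem stmt_14 {d : ℕ}
    (P : Set (EuclideanSpace ℝ (Fin d)))
    (hPclosed : IsClosed P) (hPconvex : Convex ℝ P)
    (hPcone : ∀ (c : ℝ), 0 ≤ c → ∀ x ∈ P, c • x ∈ P)
    (hPspan : P - P = Set.univ)
    (hPpointed : P ∩ (-P) = {0})
    (l₁ l₂ : EuclideanSpace ℝ (Fin d)) (hl₁ : ‖l₁‖ = 1) (hl₂ : ‖l₂‖ = 1)
    (hl₁dual : ∀ x ∈ P, 0 ≤ (inner ℝ l₁ x : ℝ))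
    (hl₂dual : ∀ x ∈ P, 0 ≤ (inner ℝ l₂ x : ℝ))
    (hne : l₁ ≠ l₂)
    {K₁ K₂ : Type*}
    [NormedAddCommGroup K₁] [InnerProductSpace ℂ K₁] [CompleteSpace K₁]
    [Nontrivial K₁] [TopologicalSpace.SeparableSpace K₁]
    [NormedAddCommGroup K₂] [InnerProductSpace ℂ K₂] [CompleteSpace K₂]
    [Nontrivial K₂] [TopologicalSpace.SeparableSpace K₂]
    (S₁ : ℝ → (Lp K₁ 2 (volume.restrict (Set.Ici (0:ℝ))) →L[ℂ]
               Lp K₁ 2 (volume.restrict (Set.Ici (0:ℝ)))))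
    (hS₁ : ∀ t : ℝ, 0 ≤ t → ∀ f : Lp K₁ 2 (volume.restrict (Set.Ici (0:ℝ))),
      (S₁ t f : ℝ → K₁) =ᵐ[volume.restrict (Set.Ici (0:ℝ))]
        fun x => if 0 ≤ x - t then f (x - t) else 0)
    (S₂ : ℝ → (Lp K₂ 2 (volume.restrict (Set.Ici (0:ℝ))) →L[ℂ]
               Lp K₂ 2 (volume.restrict (Set.Ici (0:ℝ)))))
    (hS₂ : ∀ t : ℝ, 0 ≤ t → ∀ f : Lp K₂ 2 (volume.restrict (Set.Ici (0:ℝ))),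
      (S₂ t f : ℝ → K₂) =ᵐ[volume.restrict (Set.Ici (0:ℝ))]
        fun x => if 0 ≤ x - t then f (x - t) else 0)
    (T : Lp K₁ 2 (volume.restrict (Set.Ici (0:ℝ))) →L[ℂ]
         Lp K₂ 2 (volume.restrict (Set.Ici (0:ℝ))))
    (hT : ∀ a ∈ P, T.comp (S₁ (inner ℝ l₁ a : ℝ)) = (S₂ (inner ℝ l₂ a : ℝ)).comp T)
    (hT' : ∀ a ∈ P,
      T.comp (ContinuousLinearMap.adjoint (S₁ (inner ℝ l₁ a : ℝ))) =
        (ContinuousLinearMap.adjoint (S₂ (inner ℝ l₂ a : ℝ))).comp T) :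
    T = 0 :=
  stmt_14_general P hPspan l₁ l₂ hl₁ hl₂ hl₁dual hl₂dual hne S₁ S₂ hS₂ T hT
end
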